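/- Let μ ≥ 1, ℓ ≥ 0, m ≥ 0 be integers with gcd(2ℓ+1, 2m+1) = 1, set M = 2ℓ + 4m + 3 and σ = 2·(2m+1)²·k. Then for every pair (κ, λ) ∈ {(0,1), (1,0)} and every integer k with gcd(k, M) = 1, one has H_M( q^σ · f((−1)^κ q^{(2m+1)k}, (−1)^κ q^{μM−(2m+1)k})^{2ℓ+1} · f((−1)^λ q^{(2ℓ+1)k}, (−1)^λ q^{2μM−(2ℓ+1)k})^{2m+1} ) = 0. -/

import Mathlib

/-!
Common setup: Ramanujan theta series as formal Laurent series over `ℚ`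
(`LaurentSeries ℚ = HahnSeries ℤ ℚ`), and the huffing operator `H_M`.
-/

noncomputable section

open scoped Classical

namespace ThetaVanish

/-- A subset of `ℤ` that is bounded below is partially well-ordered. -/
theorem isPWO_of_subset_Ici {a : ℤ} {s : Set ℤ} (h : s ⊆ Set.Ici a) : s.IsPWO := by
  have hWF : s.IsWF := by
    rw [Set.isWF_iff_no_descending_seq]
    intro f hf hmem
    have key : ∀ n : ℕ, f n + n ≤ f 0 := by
      intro n
      induction n with
      | zero => simp
      | succ k ih =>
        have h2 : f (k + 1) < f k := hf (Nat.lt_succ_self k)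
        push_cast
        push_cast at ih
        omega
    have h1 := key (f 0 - a + 1).toNat
    have h2 : a ≤ f ((f 0 - a + 1).toNat) := h (hmem _)
    have h3 : a ≤ f 0 := h (hmem 0)
    omega
  exact hWF.isPWO

/-- The coefficient of `q^N` in Ramanujan's theta series `f(ε q^r, ε q^s)`:
the (finite, when `r + s > 0`) sum of `ε^n` over all integers `n` with
`r·n(n+1)/2 + s·n(n-1)/2 = N`. -/
def thetaCoeff (ε r s : ℤ) : ℤ → ℚ := fun N =>
  ∑ᶠ n : ℤ, if r * (n * (n + 1) / 2) + s * (n * (n - 1) / 2) = N then (ε : ℚ) ^ n else 0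

theorem thetaCoeff_support (ε r s : ℤ) (h : 0 < r + s) :
    Function.support (thetaCoeff ε r s) ⊆ Set.Ici (-(r - s) ^ 2) := by
  intro N hN
  simp only [Function.mem_support, ne_eq] at hN
  rw [Set.mem_Ici]
  by_contra hcon
  push_neg at hcon
  apply hN
  apply finsum_eq_zero_of_forall_eq_zero
  intro n
  rw [if_neg]
  intro hQ
  obtain ⟨c, hc⟩ := Int.even_mul_succ_self n
  obtain ⟨e, he⟩ := Int.even_mul_pred_self n
  have hc' : n * (n + 1) = 2 * c := by omega
  have he' : n * (n - 1) = 2 * e := by omega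
  have e1 : n * (n + 1) / 2 = c := by omega
  have e2 : n * (n - 1) / 2 = e := by omega
  rw [e1, e2] at hQ
  have key : 2 * N = (r + s) * n ^ 2 + (r - s) * n := by
    linear_combination -2 * hQ - r * hc' - s * he'
  nlinarith [sq_nonneg (2 * n + r - s), sq_nonneg (r - s),
    mul_nonneg (show (0:ℤ) ≤ r + s - 1 by omega) (sq_nonneg n)]

/-- Ramanujan's theta series `f(ε q^r, ε q^s)` (for a sign `ε ∈ {1, -1}` and
`r + s > 0`), as a formal Laurent series over `ℚ`; junk value `0` if `r + s ≤ 0`. -/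
def theta (ε r s : ℤ) : LaurentSeries ℚ :=
  if h : 0 < r + s then
    { coeff := thetaCoeff ε r s
      isPWO_support' := isPWO_of_subset_Ici (thetaCoeff_support ε r s h) }
  else 0

/-- The huffing operator `H_M`: keep only the coefficients whose index is a
multiple of `M`. -/
def huff (M : ℤ) (G : LaurentSeries ℚ) : LaurentSeries ℚ where
  coeff N := if M ∣ N then G.coeff N else 0
  isPWO_support' := by
    apply Set.IsPWO.mono G.isPWO_support
    intro N hN
    simp only [Function.mem_support, ne_eq] at hN
    rw [HahnSeries.mem_support]
    by_cases hd : M ∣ N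
    · rwa [if_pos hd] at hN
    · exact absurd (if_neg hd) hN

/-!
Write `a = 2ℓ + 1`, `b = 2m + 1`, so that `M = a + 2b`, and expand the product as a sum over index
tuples `(n, p) ∈ ℤ^a × ℤ^b`: the tuple contributes `ε₁^(Σ n) ε₂^(Σ p) q^(σ + w)`, where `w` is the
sum of the exponents of the chosen terms of the two theta series. Since `M` divides `r + s` for
both theta series, `σ + w ≡ k b (Σ n - 2 Σ p + 2b) (mod M)`, so by coprimality the terms kept by
`H_M` are those with `Σ n - 2 Σ p + 2b = M v`. On them, shifting every `nᵢ` by `-t` and every `pⱼ`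
by `t`, with `t = 2v - 1`, preserves the exponent and, `t` being odd and `ε₁ ε₂ = -1`, reverses the
sign. The shift is an involution (it sends `v` to `1 - v`), so these terms cancel in pairs.
-/

end ThetaVanish

theorem finsum_eq_zero_of_involutive {α G : Type*} [AddCommGroup G] [IsAddTorsionFree G]
    {f : α → G} (hf : f.support.Finite) {ι : α → α} (hι : Function.Involutive ι)
    (hneg : ∀ x, f x ≠ 0 → f (ι x) = -f x) : ∑ᶠ x, f x = 0 := by
  rw [finsum_eq_sum f hf]
  refine Finset.sum_involution (fun x _ => ι x) (fun x hx => ?_) (fun x hx _ hfix => ?_)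
    (fun x hx => ?_) (fun x _ => hι x) <;> rw [Set.Finite.mem_toFinset] at hx
  · rw [hneg x hx, add_neg_cancel]
  · have hself := hneg x hx
    rw [hfix, self_eq_neg] at hself
    exact hx hself
  · rw [Set.Finite.mem_toFinset, Function.mem_support, hneg x hx, neg_ne_zero]
    exact hx

theorem prod_zpow_eq_zpow_sum₀ {K ι : Type*} [CommGroupWithZero K] {x : K} (hx : x ≠ 0)
    (s : Finset ι) (f : ι → ℤ) : ∏ i ∈ s, x ^ f i = x ^ ∑ i ∈ s, f i := by
  classical
  induction s using Finset.induction_on with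
  | empty => simp
  | insert i s hi ih => rw [Finset.prod_insert hi, ih, Finset.sum_insert hi, zpow_add₀ hx]

namespace HahnSeries

variable {Γ R : Type*} [AddCommMonoid Γ] [PartialOrder Γ] [IsOrderedCancelAddMonoid Γ]
  [CommSemiring R]

theorem prod_single {ι : Type*} (s : Finset ι) (g : ι → Γ) (c : ι → R) :
    ∏ i ∈ s, single (g i) (c i) = single (∑ i ∈ s, g i) (∏ i ∈ s, c i) := by
  classical
  induction s using Finset.induction_on with
  | empty => simp
  | insert i s hi ih =>
    rw [Finset.prod_insert hi, ih, single_mul_single, Finset.sum_insert hi, Finset.prod_insert hi]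

namespace SummableFamily

variable {α : Type*}

def piPow (s : SummableFamily Γ R α) : (e : ℕ) → SummableFamily Γ R (Fin e → α)
  | 0 => const _ 1
  | e + 1 => Equiv (Fin.consEquiv fun _ => α) (s.mul (s.piPow e))

theorem piPow_apply (s : SummableFamily Γ R α) (e : ℕ) (x : Fin e → α) :
    s.piPow e x = ∏ i, s (x i) := by
  induction e with
  | zero => rfl
  | succ e ih =>
    rw [Fin.prod_univ_succ, ← ih]
    rfl

theorem hsum_piPow (s : SummableFamily Γ R α) (e : ℕ) : (s.piPow e).hsum = s.hsum ^ e := by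
  induction e with
  | zero => exact hsum_unique _
  | succ e ih => rw [piPow, hsum_equiv, hsum_mul, ih, pow_succ']

end SummableFamily

end HahnSeries

namespace ThetaVanish

open HahnSeries

def thetaExp (r s n : ℤ) : ℤ := r * (n * (n + 1) / 2) + s * (n * (n - 1) / 2)

theorem two_mul_thetaExp (r s n : ℤ) :
    2 * thetaExp r s n = (r + s) * n ^ 2 + (r - s) * n := by
  have h₁ : n * (n + 1) / 2 * 2 = n * (n + 1) :=
    Int.ediv_mul_cancel (even_iff_two_dvd.mp (Int.even_mul_succ_self n))
  have h₂ : n * (n - 1) / 2 * 2 = n * (n - 1) :=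
    Int.ediv_mul_cancel (even_iff_two_dvd.mp (Int.even_mul_pred_self n))
  unfold thetaExp
  linear_combination r * h₁ + s * h₂

theorem thetaExp_add (r s n t : ℤ) :
    thetaExp r s (n + t) = thetaExp r s n + thetaExp r s t + (r + s) * t * n := by
  apply mul_left_cancel₀ (two_ne_zero : (2 : ℤ) ≠ 0)
  linear_combination two_mul_thetaExp r s (n + t) - two_mul_thetaExp r s n
    - two_mul_thetaExp r s t

theorem thetaExp_sub_mul (r s n : ℤ) :
    thetaExp r s n - r * n = (r + s) * (n * (n - 1) / 2) := by
  have h : n * (n + 1) / 2 = n * (n - 1) / 2 + n := by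
    rw [show n * (n + 1) = n * (n - 1) + n * 2 by ring, Int.add_mul_ediv_right _ _ two_ne_zero]
  rw [thetaExp, h]
  ring

theorem neg_sq_le_thetaExp {r s : ℤ} (h : 0 < r + s) (n : ℤ) :
    -(r - s) ^ 2 ≤ thetaExp r s n := by
  nlinarith [two_mul_thetaExp r s n, sq_nonneg (2 * n + (r - s)),
    mul_nonneg (sub_nonneg.mpr h) (sq_nonneg n), sq_nonneg (r - s)]

theorem finite_thetaExp_eq {r s : ℤ} (h : 0 < r + s) (N : ℤ) :
    {n : ℤ | thetaExp r s n = N}.Finite := by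
  refine (Set.finite_Icc (-(2 * |N| + |r - s|)) (2 * |N| + |r - s|)).subset fun n hn => ?_
  have hE := two_mul_thetaExp r s n
  rw [show thetaExp r s n = N from hn] at hE
  have hL : n ^ 2 ≤ (r + s) * n ^ 2 := le_mul_of_one_le_left (sq_nonneg n) h
  constructor <;>
    nlinarith [abs_nonneg N, le_abs_self N, neg_abs_le N, le_abs_self (r - s), neg_abs_le (r - s)]

theorem sum_thetaExp_add (r s t : ℤ) {e : ℕ} (n : Fin e → ℤ) :
    ∑ i, thetaExp r s (n i + t) =
      ∑ i, thetaExp r s (n i) + e * thetaExp r s t + (r + s) * t * ∑ i, n i := by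
  simp [thetaExp_add, Finset.sum_add_distrib, Finset.mul_sum]

theorem dvd_sum_thetaExp_sub {M r s : ℤ} (h : M ∣ r + s) {e : ℕ} (n : Fin e → ℤ) :
    M ∣ ∑ i, thetaExp r s (n i) - r * ∑ i, n i := by
  rw [Finset.mul_sum, ← Finset.sum_sub_distrib]
  exact Finset.dvd_sum fun i _ => thetaExp_sub_mul r s (n i) ▸ h.mul_right _

def thetaFamily (ε r s : ℤ) (h : 0 < r + s) : SummableFamily ℤ ℚ ℤ where
  toFun n := single (thetaExp r s n) ((ε : ℚ) ^ n)
  isPWO_iUnion_support' := by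
    refine isPWO_of_subset_Ici (a := -(r - s) ^ 2) fun N hN => ?_
    obtain ⟨n, hn⟩ := Set.mem_iUnion.mp hN
    rw [support_single_subset hn]
    exact neg_sq_le_thetaExp h n
  finite_co_support' N :=
    (finite_thetaExp_eq h N).subset fun n hn => (support_single_subset (by exact hn)).symm

theorem theta_eq_hsum {ε r s : ℤ} (h : 0 < r + s) :
    theta ε r s = (thetaFamily ε r s h).hsum := by
  ext N
  rw [theta, dif_pos h, SummableFamily.coeff_hsum]
  refine finsum_congr fun n => ?_
  simp only [thetaFamily, SummableFamily.coe_mk, coeff_single, eq_comm (a := N)]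
  rfl

theorem theta_pow_eq_hsum {ε r s : ℤ} (h : 0 < r + s) (e : ℕ) :
    theta ε r s ^ e = ((thetaFamily ε r s h).piPow e).hsum := by
  rw [SummableFamily.hsum_piPow, theta_eq_hsum h]

theorem piPow_thetaFamily_apply {ε r s : ℤ} (h : 0 < r + s) (hε : ε ≠ 0) {e : ℕ}
    (n : Fin e → ℤ) :
    (thetaFamily ε r s h).piPow e n = single (∑ i, thetaExp r s (n i)) ((ε : ℚ) ^ ∑ i, n i) := by
  rw [SummableFamily.piPow_apply, ← prod_zpow_eq_zpow_sum₀ (Int.cast_ne_zero.mpr hε),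
    ← prod_single]
  rfl

theorem huff_eq_zero_iff {M : ℤ} {G : LaurentSeries ℚ} :
    huff M G = 0 ↔ ∀ N, M ∣ N → G.coeff N = 0 := by
  simp [HahnSeries.ext_iff, funext_iff, huff]

section PairFlip

variable {a b : ℕ}

def balance (x : (Fin a → ℤ) × (Fin b → ℤ)) : ℤ := ∑ i, x.1 i - 2 * ∑ j, x.2 j + 2 * b

def pairFlip (x : (Fin a → ℤ) × (Fin b → ℤ)) : (Fin a → ℤ) × (Fin b → ℤ) :=
  let t := 2 * (balance x / (a + 2 * b)) - 1
  (fun i => x.1 i - t, fun j => x.2 j + t)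

theorem sum_pairFlip_fst (x : (Fin a → ℤ) × (Fin b → ℤ)) :
    ∑ i, (pairFlip x).1 i = ∑ i, x.1 i - a * (2 * (balance x / (a + 2 * b)) - 1) := by
  simp only [pairFlip, Finset.sum_sub_distrib, Finset.sum_const, Finset.card_univ,
    Fintype.card_fin, nsmul_eq_mul]
  ring

theorem sum_pairFlip_snd (x : (Fin a → ℤ) × (Fin b → ℤ)) :
    ∑ j, (pairFlip x).2 j = ∑ j, x.2 j + b * (2 * (balance x / (a + 2 * b)) - 1) := by
  simp only [pairFlip, Finset.sum_add_distrib, Finset.sum_const, Finset.card_univ,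
    Fintype.card_fin, nsmul_eq_mul]

theorem balance_pairFlip_div (h : (a : ℤ) + 2 * b ≠ 0) (x : (Fin a → ℤ) × (Fin b → ℤ)) :
    balance (pairFlip x) / (a + 2 * b) = 1 - balance x / (a + 2 * b) := by
  set v := balance x / (a + 2 * b) with hv
  have hflip : balance (pairFlip x) = balance x + (a + 2 * b) * (1 - 2 * v) := by
    rw [balance, sum_pairFlip_fst, sum_pairFlip_snd, ← hv, balance]
    ring
  rw [hflip, Int.add_mul_ediv_left _ _ h]
  ring

theorem pairFlip_involutive (h : (a : ℤ) + 2 * b ≠ 0) :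
    Function.Involutive (pairFlip : (Fin a → ℤ) × (Fin b → ℤ) → _) := by
  intro x
  have hv := balance_pairFlip_div h x
  simp only [pairFlip] at hv ⊢
  rw [hv]
  ext <;> simp only <;> ring

theorem zpow_sum_pairFlip {ε₁ ε₂ : ℤ} (hε : ε₁ * ε₂ = -1) (ha : Odd a) (hb : Odd b)
    (x : (Fin a → ℤ) × (Fin b → ℤ)) :
    (ε₁ : ℚ) ^ (∑ i, (pairFlip x).1 i) * (ε₂ : ℚ) ^ (∑ j, (pairFlip x).2 j) =
      -((ε₁ : ℚ) ^ (∑ i, x.1 i) * (ε₂ : ℚ) ^ (∑ j, x.2 j)) := by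
  have ht : Odd (2 * (balance x / (a + 2 * b)) - 1) := ⟨_ - 1, by ring⟩
  rw [sum_pairFlip_fst, sum_pairFlip_snd]
  rcases Int.eq_one_or_neg_one_of_mul_eq_neg_one hε with rfl | rfl
  · obtain rfl : ε₂ = -1 := by linarith
    push_cast
    rw [one_zpow, one_zpow, zpow_add₀ (by norm_num), Odd.neg_one_zpow (hb.natCast.mul ht)]
    ring
  · obtain rfl : ε₂ = 1 := by linarith
    push_cast
    rw [one_zpow, one_zpow, zpow_sub₀ (by norm_num), Odd.neg_one_zpow (ha.natCast.mul ht)]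
    ring

variable (μ k : ℤ)

def weight (x : (Fin a → ℤ) × (Fin b → ℤ)) : ℤ :=
  ∑ i, thetaExp (b * k) (μ * (a + 2 * b) - b * k) (x.1 i) +
    ∑ j, thetaExp (a * k) (2 * μ * (a + 2 * b) - a * k) (x.2 j)

theorem dvd_weight_sub_mul_balance (x : (Fin a → ℤ) × (Fin b → ℤ)) :
    (a + 2 * b : ℤ) ∣ 2 * b ^ 2 * k + weight μ k x - k * b * balance x := by
  have h₁ := dvd_sum_thetaExp_sub (M := a + 2 * b) (r := b * k) (s := μ * (a + 2 * b) - b * k)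
    ⟨μ, by ring⟩ x.1
  have h₂ := dvd_sum_thetaExp_sub (M := a + 2 * b) (r := a * k)
    (s := 2 * μ * (a + 2 * b) - a * k) ⟨2 * μ, by ring⟩ x.2
  have hsplit : 2 * b ^ 2 * k + weight μ k x - k * b * balance x =
      (∑ i, thetaExp (b * k) (μ * (a + 2 * b) - b * k) (x.1 i) - b * k * ∑ i, x.1 i) +
      (∑ j, thetaExp (a * k) (2 * μ * (a + 2 * b) - a * k) (x.2 j) - a * k * ∑ j, x.2 j) +
      (a + 2 * b) * (k * ∑ j, x.2 j) := by
    rw [weight, balance]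
    ring
  rw [hsplit]
  exact dvd_add (dvd_add h₁ h₂) (dvd_mul_right _ _)

theorem weight_pairFlip {x : (Fin a → ℤ) × (Fin b → ℤ)} (h : (a + 2 * b : ℤ) ∣ balance x) :
    weight μ k (pairFlip x) = weight μ k x := by
  set v := balance x / (a + 2 * b) with hv_def
  have hv : balance x = (a + 2 * b) * v := (Int.mul_ediv_cancel' h).symm
  have h₁ := two_mul_thetaExp (b * k) (μ * (a + 2 * b) - b * k) (-(2 * v - 1))
  have h₂ := two_mul_thetaExp (a * k) (2 * μ * (a + 2 * b) - a * k) (2 * v - 1)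
  simp only [weight, pairFlip, ← hv_def, sub_eq_add_neg (x.1 _)]
  rw [sum_thetaExp_add, sum_thetaExp_add]
  rw [balance] at hv
  apply mul_left_cancel₀ (two_ne_zero : (2 : ℤ) ≠ 0)
  linear_combination a * h₁ + b * h₂ - 2 * μ * (a + 2 * b) * (2 * v - 1) * hv

theorem mul_piPow_thetaFamily_apply {ε₁ ε₂ : ℤ} (h₁ : 0 < b * k + (μ * (a + 2 * b) - b * k))
    (h₂ : 0 < a * k + (2 * μ * (a + 2 * b) - a * k)) (hε₁ : ε₁ ≠ 0) (hε₂ : ε₂ ≠ 0)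
    (x : (Fin a → ℤ) × (Fin b → ℤ)) :
    ((thetaFamily ε₁ _ _ h₁).piPow a).mul ((thetaFamily ε₂ _ _ h₂).piPow b) x =
      single (weight μ k x) ((ε₁ : ℚ) ^ (∑ i, x.1 i) * (ε₂ : ℚ) ^ (∑ j, x.2 j)) := by
  rw [SummableFamily.mul_toFun, piPow_thetaFamily_apply _ hε₁, piPow_thetaFamily_apply _ hε₂,
    single_mul_single]
  rfl

end PairFlip

theorem huff_single_mul_theta_pow_mul_theta_pow (μ k : ℤ) {a b : ℕ} {ε₁ ε₂ : ℤ} (hμ : 0 < μ)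
    (ha : Odd a) (hb : Odd b) (hε : ε₁ * ε₂ = -1) (hab : IsCoprime (a : ℤ) b)
    (hk : IsCoprime ((a : ℤ) + 2 * b) k) :
    huff (a + 2 * b) (single (2 * b ^ 2 * k) (1 : ℚ)
      * theta ε₁ (b * k) (μ * (a + 2 * b) - b * k) ^ a
      * theta ε₂ (a * k) (2 * μ * (a + 2 * b) - a * k) ^ b) = 0 := by
  have hM : (0 : ℤ) < a + 2 * b := by have := ha.pos; omega
  have h₁ : 0 < b * k + (μ * (a + 2 * b) - b * k) := by nlinarith
  have h₂ : 0 < a * k + (2 * μ * (a + 2 * b) - a * k) := by nlinarith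
  have hε₁ : ε₁ ≠ 0 := left_ne_zero_of_mul (by rw [hε]; norm_num)
  have hε₂ : ε₂ ≠ 0 := right_ne_zero_of_mul (by rw [hε]; norm_num)
  have hcop : IsCoprime ((a : ℤ) + 2 * b) (k * b) := hk.mul_right (hab.add_mul_right_left 2)
  rw [huff_eq_zero_iff]
  intro N hN
  rw [← sub_add_cancel N (2 * b ^ 2 * k), mul_assoc, coeff_single_mul_add, one_mul,
    theta_pow_eq_hsum h₁, theta_pow_eq_hsum h₂, ← SummableFamily.hsum_mul,
    SummableFamily.coeff_hsum]
  refine finsum_eq_zero_of_involutive (SummableFamily.finite_co_support _ _)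
    (pairFlip_involutive hM.ne') fun x hx => ?_
  simp only [mul_piPow_thetaFamily_apply μ k h₁ h₂ hε₁ hε₂, coeff_single] at hx ⊢
  have hw : N - 2 * b ^ 2 * k = weight μ k x := of_not_not fun h => hx (if_neg h)
  have hbal : (a + 2 * b : ℤ) ∣ balance x := by
    refine hcop.dvd_of_dvd_mul_left ?_
    have hkb : k * b * balance x =
        N - (2 * b ^ 2 * k + weight μ k x - k * b * balance x) := by
      rw [← hw]
      ring
    rw [hkb]
    exact dvd_sub hN (dvd_weight_sub_mul_balance μ k x)
  simp only [weight_pairFlip μ k hbal, zpow_sum_pairFlip hε ha hb, hw, ↓reduceIte]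

/-- **Theorem (Type II, eq. (1.12))**: with `gcd(2ℓ+1, 2m+1) = 1`,
`M = 2ℓ + 4m + 3` and `σ = 2(2m+1)²k`, for `(κ, λ) ∈ {(0,1), (1,0)}`
and `gcd(k, M) = 1`,
`H_M(q^σ · f((-1)^κ q^{(2m+1)k}, (-1)^κ q^{μM-(2m+1)k})^{2ℓ+1} ·
  f((-1)^λ q^{(2ℓ+1)k}, (-1)^λ q^{2μM-(2ℓ+1)k})^{2m+1}) = 0`. -/
theorem statement8 (μ ℓ m k M σ : ℤ) (hμ : 1 ≤ μ) (hℓ : 0 ≤ ℓ) (hm : 0 ≤ m)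
    (hcop : Int.gcd (2 * ℓ + 1) (2 * m + 1) = 1)
    (hM : M = 2 * ℓ + 4 * m + 3) (hσ : σ = 2 * (2 * m + 1) ^ 2 * k)
    (κ lam : ℕ) (hκlam : (κ = 0 ∧ lam = 1) ∨ (κ = 1 ∧ lam = 0))
    (hk : Int.gcd k M = 1) :
    huff M (HahnSeries.single σ (1 : ℚ)
      * theta ((-1) ^ κ) ((2 * m + 1) * k) (μ * M - (2 * m + 1) * k) ^ (2 * ℓ + 1)
      * theta ((-1) ^ lam) ((2 * ℓ + 1) * k)
          (2 * μ * M - (2 * ℓ + 1) * k) ^ (2 * m + 1)) = 0 := by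
  obtain ⟨a, ha⟩ : ∃ a : ℕ, (a : ℤ) = 2 * ℓ + 1 := ⟨_, Int.toNat_of_nonneg (by omega)⟩
  obtain ⟨b, hb⟩ : ∃ b : ℕ, (b : ℤ) = 2 * m + 1 := ⟨_, Int.toNat_of_nonneg (by omega)⟩
  obtain rfl : M = a + 2 * b := by omega
  subst hσ
  rw [← ha, ← hb, zpow_natCast, zpow_natCast]
  refine huff_single_mul_theta_pow_mul_theta_pow μ k (by omega)
    (Int.odd_coe_nat a |>.mp ⟨ℓ, ha⟩) (Int.odd_coe_nat b |>.mp ⟨m, hb⟩) ?_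
    (Int.isCoprime_iff_gcd_eq_one.mpr (ha ▸ hb ▸ hcop))
    (Int.isCoprime_iff_gcd_eq_one.mpr (Int.gcd_comm k _ ▸ hk))
  rcases hκlam with ⟨rfl, rfl⟩ | ⟨rfl, rfl⟩ <;> norm_num

end ThetaVanish
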